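/- Let 𝒢 be a family of finite groups containing the trivial group. Suppose a group G acts on a finite tree T so that conditions (a)–(c) of the definition of T(𝒢) hold, and let uv be an edge such that G_w ⊆ G_u for every vertex w of T̂_{u,v}. Then both (i) the action of the subgroup S_{u→v} on T and (ii) the induced action of S_{u→v} on the subtree T̂_{u,v} satisfy conditions (a)–(c) for the same family 𝒢. -/

import Mathlib

/-- The automorphism group of a simple graph, as a subgroup of the permutation group
of the vertices. -/
def graphAut {V : Type} (T : SimpleGraph V) : Subgroup (Equiv.Perm V) where
  carrier := {g | ∀ x y : V, T.Adj (g x) (g y) ↔ T.Adj x y}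
  one_mem' := by intro x y; simp
  mul_mem' := by
    intro a b ha hb x y
    simp only [Equiv.Perm.mul_apply]
    rw [ha, hb]
  inv_mem' := by
    intro a ha x y
    rw [← ha (a⁻¹ x) (a⁻¹ y)]
    simp

/-- The vertex set of the subtree `T_{u,v}` growing out of the vertex `u` towards `v`:
`u` together with all vertices reachable from `v` by a walk avoiding `u`. -/
def sideSet {V : Type} (T : SimpleGraph V) (u v : V) : Set V :=
  insert u {w | ∃ p : T.Walk v w, u ∉ p.support}

/-- The vertex set of the subtree `T̂_{u,v}`: the connected component of `v` in `T - u`. -/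
def hatSide {V : Type} (T : SimpleGraph V) (u v : V) : Set V :=
  {w | ∃ p : T.Walk v w, u ∉ p.support}

/-- `h` is the automorphism `r_{uv}(g)`: it agrees with `g` on `T_{u,v}` and is the identity
on `T_{v,u}`. -/
def IsRestr {V : Type} (T : SimpleGraph V) (u v : V) (g h : Equiv.Perm V) : Prop :=
  (∀ w ∈ sideSet T u v, h w = g w) ∧ (∀ w ∈ sideSet T v u, h w = w)

/-- `t`-decomposability of the action of a group `S` of automorphisms of `T`:
for every edge `uv` and every `g ∈ S` fixing both `u` and `v`, the automorphism `r_{uv}(g)`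
again belongs to `S`. -/
def TDecomposable {V : Type} (T : SimpleGraph V) (S : Subgroup (Equiv.Perm V)) : Prop :=
  ∀ u v : V, T.Adj u v → ∀ g ∈ S, g u = u → g v = v → ∃ h ∈ S, IsRestr T u v g h

/-- The support of `g` (as a set of vertices and edges of `T`) is contained in the set of
vertices `A` (and the edges spanned by it). -/
def SuppIn {V : Type} (T : SimpleGraph V) (g : Equiv.Perm V) (A : Set V) : Prop :=
  (∀ w : V, g w ≠ w → w ∈ A) ∧
  (∀ x y : V, T.Adj x y → s(g x, g y) ≠ s(x, y) → x ∈ A ∧ y ∈ A)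

/-- The subgroup `S_{u→v}` of all elements of `S` supported in `T̂_{u,v}`. -/
def sArrow {V : Type} (T : SimpleGraph V) (S : Subgroup (Equiv.Perm V)) (hS : S ≤ graphAut T)
    (u v : V) : Subgroup (Equiv.Perm V) where
  carrier := {g | g ∈ S ∧ SuppIn T g (hatSide T u v)}
  one_mem' := ⟨S.one_mem, fun w hw => absurd rfl hw, fun x y _ hxy => absurd rfl hxy⟩
  mul_mem' := by
    rintro g h ⟨hgS, hgv, hge⟩ ⟨hhS, hhv, hhe⟩
    refine ⟨S.mul_mem hgS hhS, fun w hw => ?_, fun x y hadj hne => ?_⟩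
    · by_cases hhw : h w = w
      · exact hgv w (by simpa [Equiv.Perm.mul_apply, hhw] using hw)
      · exact hhv w hhw
    · by_cases hcase : s(h x, h y) = s(x, y)
      · rcases Sym2.eq_iff.mp hcase with ⟨hx, hy⟩ | ⟨hx, hy⟩
        · refine hge x y hadj ?_
          simpa [Equiv.Perm.mul_apply, hx, hy] using hne
        · have hxy : x ≠ y := T.ne_of_adj hadj
          exact ⟨hhv x (by rw [hx]; exact hxy.symm), hhv y (by rw [hy]; exact hxy)⟩
      · exact hhe x y hadj hcase
  inv_mem' := by
    rintro g ⟨hgS, hgv, hge⟩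
    refine ⟨S.inv_mem hgS, fun w hw => ?_, fun x y hadj hne => ?_⟩
    · refine hgv w fun hgw => hw ?_
      calc g⁻¹ w = g⁻¹ (g w) := by rw [hgw]
      _ = w := Equiv.symm_apply_apply g w
    · have hg' : g⁻¹ ∈ graphAut T := Subgroup.inv_mem _ (hS hgS)
      have hadj' : T.Adj (g⁻¹ x) (g⁻¹ y) := (hg' x y).mpr hadj
      have hmoved : s(g (g⁻¹ x), g (g⁻¹ y)) ≠ s(g⁻¹ x, g⁻¹ y) := by
        simp only [Equiv.Perm.coe_inv, Equiv.apply_symm_apply]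
        exact fun hh => hne hh.symm
      have h2 := hge (g⁻¹ x) (g⁻¹ y) hadj' hmoved
      constructor
      · by_cases hx : g⁻¹ x = x
        · rw [← hx]; exact h2.1
        · refine hgv x fun hgx => hx ?_
          calc g⁻¹ x = g⁻¹ (g x) := by rw [hgx]
          _ = x := Equiv.symm_apply_apply g x
      · by_cases hy : g⁻¹ y = y
        · rw [← hy]; exact h2.2
        · refine hgv y fun hgy => hy ?_
          calc g⁻¹ y = g⁻¹ (g y) := by rw [hgy]
          _ = y := Equiv.symm_apply_apply g y

/-- The local stabilizer `G^{loc}_u`: the group of permutations of the set of neighbours of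
`u` (equivalently, of the edges incident to `u`) induced by the elements of `S` fixing `u`. -/
def locStab {V : Type} (T : SimpleGraph V) (S : Subgroup (Equiv.Perm V)) (u : V) :
    Subgroup (Equiv.Perm ↥(T.neighborSet u)) where
  carrier := {σ | ∃ g ∈ S, g u = u ∧ ∀ x : ↥(T.neighborSet u), (σ x : V) = g (x : V)}
  one_mem' := ⟨1, S.one_mem, rfl, fun _ => rfl⟩
  mul_mem' := by
    rintro σ τ ⟨g, hgS, hgu, hg⟩ ⟨k, hkS, hku, hk⟩
    refine ⟨g * k, S.mul_mem hgS hkS, by simp [Equiv.Perm.mul_apply, hku, hgu], fun x => ?_⟩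
    have h1 : ((σ * τ) x : V) = (σ (τ x) : V) := rfl
    rw [h1, hg (τ x), hk x]
    rfl
  inv_mem' := by
    rintro σ ⟨g, hgS, hgu, hg⟩
    refine ⟨g⁻¹, S.inv_mem hgS, ?_, fun x => ?_⟩
    · calc g⁻¹ u = g⁻¹ (g u) := by rw [hgu]
      _ = u := Equiv.symm_apply_apply g u
    · have h1 : (x : V) = g ((σ⁻¹ x : ↥(T.neighborSet u)) : V) := by
        have h2 := hg (σ⁻¹ x)
        rwa [← Equiv.Perm.mul_apply, mul_inv_cancel, Equiv.Perm.one_apply] at h2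
      rw [h1]; exact (Equiv.symm_apply_apply g _).symm

/-- A group of permutations acts semi-freely if every non-identity element moves every point
which is not a common fixed point of the whole group. -/
def SemiFree {α : Type} (K : Subgroup (Equiv.Perm α)) : Prop :=
  ∀ g ∈ K, g ≠ 1 → ∀ x : α, g x = x → ∀ h ∈ K, h x = x

/-- Some vertex or some edge of `T` is invariant under all of `S`. -/
def HasFixedVertexOrEdge {V : Type} (T : SimpleGraph V) (S : Subgroup (Equiv.Perm V)) : Prop :=
  (∃ u : V, ∀ g ∈ S, g u = u) ∨
  (∃ u v : V, T.Adj u v ∧ ∀ g ∈ S, (g u = u ∧ g v = v) ∨ (g u = v ∧ g v = u))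

/-- A group belongs to the family `𝒢` (viewed as a family of isomorphism types). -/
def InClass (𝒢 : (G : Type) → [inst : Group G] → Prop) (H : Type) [Group H] : Prop :=
  ∃ (G : Type) (_ : Group G), 𝒢 G ∧ Nonempty (H ≃* G)

/-- Conditions (a)-(c) on the action of a group `S` of automorphisms of a tree `T`:
(a) some vertex or edge is fixed by all of `S`; (b) the action is `t`-decomposable;
(c) every local stabilizer belongs to `𝒢` and acts semi-freely on the incident edges. -/
def GoodAction (𝒢 : (G : Type) → [inst : Group G] → Prop) {V : Type}
    (T : SimpleGraph V) (S : Subgroup (Equiv.Perm V)) : Prop :=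
  S ≤ graphAut T ∧ HasFixedVertexOrEdge T S ∧ TDecomposable T S ∧
    ∀ u : V, InClass 𝒢 ↥(locStab T S u) ∧ SemiFree (locStab T S u)

/-- The group of permutations of a subset `A ⊆ V` induced by the elements of `S`. -/
def restrictedTo {V : Type} (S : Subgroup (Equiv.Perm V)) (A : Set V) :
    Subgroup (Equiv.Perm ↥A) where
  carrier := {σ | ∃ g ∈ S, ∀ x : ↥A, (σ x : V) = g (x : V)}
  one_mem' := ⟨1, S.one_mem, fun _ => rfl⟩
  mul_mem' := by
    rintro σ τ ⟨g, hgS, hg⟩ ⟨k, hkS, hk⟩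
    refine ⟨g * k, S.mul_mem hgS hkS, fun x => ?_⟩
    have h1 : ((σ * τ) x : V) = (σ (τ x) : V) := rfl
    rw [h1, hg (τ x), hk x]
    rfl
  inv_mem' := by
    rintro σ ⟨g, hgS, hg⟩
    refine ⟨g⁻¹, S.inv_mem hgS, fun x => ?_⟩
    have h1 : (x : V) = g ((σ⁻¹ x : ↥A) : V) := by
      have h2 := hg (σ⁻¹ x)
      rwa [← Equiv.Perm.mul_apply, mul_inv_cancel, Equiv.Perm.one_apply] at h2
    rw [h1]; exact (Equiv.symm_apply_apply g _).symm

/-! ### Auxiliary lemmas -/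

section Aux

open SimpleGraph

variable {V : Type}

lemma list_map_fix {α : Type*} {f : α → α} :
    ∀ {l : List α}, l.map f = l → ∀ x ∈ l, f x = x := by
  intro l
  induction l with
  | nil => intro _ x hx; simp at hx
  | cons a l ih =>
    intro h x hx
    simp only [List.map_cons, List.cons.injEq] at h
    rcases List.mem_cons.mp hx with rfl | hx
    · exact h.1
    · exact ih h.2 x hx

lemma mem_graphAut {T : SimpleGraph V} {g : Equiv.Perm V} :
    g ∈ graphAut T ↔ ∀ x y : V, T.Adj (g x) (g y) ↔ T.Adj x y := Iff.rfl

lemma mem_sArrow {T : SimpleGraph V} {S : Subgroup (Equiv.Perm V)} {hS : S ≤ graphAut T}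
    {u v : V} {g : Equiv.Perm V} :
    g ∈ sArrow T S hS u v ↔ g ∈ S ∧ SuppIn T g (hatSide T u v) := Iff.rfl

lemma mem_locStab {T : SimpleGraph V} {S : Subgroup (Equiv.Perm V)} {u : V}
    {σ : Equiv.Perm ↥(T.neighborSet u)} :
    σ ∈ locStab T S u ↔
      ∃ g ∈ S, g u = u ∧ ∀ x : ↥(T.neighborSet u), (σ x : V) = g (x : V) := Iff.rfl

lemma mem_restrictedTo {S : Subgroup (Equiv.Perm V)} {A : Set V} {σ : Equiv.Perm ↥A} :
    σ ∈ restrictedTo S A ↔ ∃ g ∈ S, ∀ x : ↥A, (σ x : V) = g (x : V) := Iff.rfl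

lemma not_mem_hatSide_self (T : SimpleGraph V) (u v : V) : u ∉ hatSide T u v := by
  rintro ⟨p, hp⟩
  exact hp p.end_mem_support

lemma mem_hatSide_self {T : SimpleGraph V} {u v : V} (h : u ≠ v) : v ∈ hatSide T u v :=
  ⟨Walk.nil, by simp [h]⟩

lemma hatSide_adj {T : SimpleGraph V} {u v x y : V} (hx : x ∈ hatSide T u v)
    (hxy : T.Adj x y) (hy : y ≠ u) : y ∈ hatSide T u v := by
  obtain ⟨p, hp⟩ := hx
  refine ⟨p.concat hxy, ?_⟩
  rw [Walk.support_concat]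
  simp only [List.mem_append, List.mem_singleton]
  rintro (h | h)
  · exact hp h
  · exact hy h.symm

lemma sideSet_eq (T : SimpleGraph V) (u v : V) :
    sideSet T u v = insert u (hatSide T u v) := rfl

/-- Every vertex lies on one of the two sides of an edge. -/
lemma side_cover {T : SimpleGraph V} (hT : T.IsTree) {a b : V} (hab : a ≠ b) (x : V) :
    x ∈ sideSet T a b ∨ x ∈ sideSet T b a := by
  classical
  obtain ⟨q⟩ := (hT.isConnected.preconnected a x)
  set p := q.bypass with hp
  have hpath : p.IsPath := q.bypass_isPath
  by_cases hb : b ∈ p.support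
  · left
    refine Or.inr ⟨p.dropUntil b hb, fun ha => ?_⟩
    have hnd : (p.support).Nodup := hpath.support_nodup
    rw [← Walk.take_spec p hb, Walk.support_append] at hnd
    have hat : a ∈ (p.takeUntil b hb).support := Walk.start_mem_support _
    have had : a ∈ ((p.dropUntil b hb).support).tail := by
      have := (p.dropUntil b hb).support_eq_cons
      rw [this] at ha
      rcases List.mem_cons.mp ha with h | h
      · exact absurd h hab
      · exact h
    exact (List.disjoint_of_nodup_append hnd) hat had
  · right
    exact Or.inr ⟨p, hb⟩

/-- The unique neighbour of `u` inside the component `T̂_{u,v}` is `v`. -/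
lemma adj_hatSide_eq {T : SimpleGraph V} (hT : T.IsTree) {u v x : V} (huv : T.Adj u v)
    (hux : T.Adj u x) (hx : x ∈ hatSide T u v) : x = v := by
  classical
  obtain ⟨q, hq⟩ := hx
  have hq' : u ∉ q.bypass.support := fun h => hq (q.support_bypass_subset h)
  have hp2 : (Walk.cons huv q.bypass).IsPath :=
    (Walk.cons_isPath_iff _ _).mpr ⟨q.bypass_isPath, hq'⟩
  have hp1 : (Walk.cons hux Walk.nil).IsPath := by
    simp [Walk.cons_isPath_iff, hux.ne]
  obtain ⟨-, hu⟩ := SimpleGraph.isTree_iff_existsUnique_path.mp hT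
  obtain ⟨p, -, hpuniq⟩ := hu u x
  have he : Walk.cons hux (Walk.nil : T.Walk x x) = Walk.cons huv q.bypass :=
    (hpuniq (Walk.cons hux Walk.nil) hp1).trans (hpuniq (Walk.cons huv q.bypass) hp2).symm
  have hs := congrArg Walk.support he
  rw [Walk.support_cons, Walk.support_cons, Walk.support_nil,
    q.bypass.support_eq_cons] at hs
  simp only [List.cons.injEq] at hs
  exact hs.2.1

/-- An automorphism fixing `u` and a vertex `w` of `T̂_{u,v}` fixes `v`. -/
lemma fix_v {T : SimpleGraph V} (hT : T.IsTree) {u v w : V} (huv : T.Adj u v)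
    (hwA : w ∈ hatSide T u v) {g : Equiv.Perm V} (hg : g ∈ graphAut T)
    (hgu : g u = u) (hgw : g w = w) : g v = v := by
  classical
  obtain ⟨q, hq⟩ := hwA
  have hq' : u ∉ q.bypass.support := fun h => hq (q.support_bypass_subset h)
  have hp : (Walk.cons huv q.bypass).IsPath :=
    (Walk.cons_isPath_iff _ _).mpr ⟨q.bypass_isPath, hq'⟩
  set p := Walk.cons huv q.bypass with hpdef
  let f : T →g T := ⟨⇑g, fun h => (hg _ _).mpr h⟩
  have hfinj : Function.Injective ⇑f := g.injective
  have hmp : ((p.map f).copy hgu hgw).IsPath := by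
    rw [Walk.isPath_copy]
    exact Walk.map_isPath_of_injective hfinj hp
  obtain ⟨-, hu⟩ := SimpleGraph.isTree_iff_existsUnique_path.mp hT
  obtain ⟨p0, -, hpuniq⟩ := hu u w
  have he : (p.map f).copy hgu hgw = p :=
    (hpuniq _ hmp).trans (hpuniq p hp).symm
  have hs := congrArg Walk.support he
  rw [Walk.support_copy, Walk.support_map] at hs
  have hv : v ∈ p.support := by
    rw [hpdef, Walk.support_cons]
    exact List.mem_cons_of_mem _ (Walk.start_mem_support _)
  exact list_map_fix hs v hv

section SArrowFacts

variable {T : SimpleGraph V} {S : Subgroup (Equiv.Perm V)} {hS : S ≤ graphAut T} {u v : V}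

/-- Elements of `S_{u→v}` fix every vertex outside `T̂_{u,v}`. -/
lemma sArrow_fix_outside {g : Equiv.Perm V} (hg : g ∈ sArrow T S hS u v)
    {x : V} (hx : x ∉ hatSide T u v) : g x = x := by
  by_contra h
  exact hx (hg.2.1 x h)

lemma sArrow_fix_u {g : Equiv.Perm V} (hg : g ∈ sArrow T S hS u v) : g u = u :=
  sArrow_fix_outside hg (not_mem_hatSide_self T u v)

lemma sArrow_fix_v (huv : T.Adj u v) {g : Equiv.Perm V}
    (hg : g ∈ sArrow T S hS u v) : g v = v := by
  by_contra h
  have hgvu : g v ≠ u := by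
    intro he
    have : g u = g v := by rw [sArrow_fix_u hg, he]
    exact huv.ne (g.injective this)
  have hmoved : s(g u, g v) ≠ s(u, v) := by
    rw [sArrow_fix_u hg]
    intro he
    rcases Sym2.eq_iff.mp he with ⟨-, h2⟩ | ⟨h1, -⟩
    · exact h h2
    · exact huv.ne h1
  exact not_mem_hatSide_self T u v (hg.2.2 u v huv hmoved).1

/-- Elements of `S_{u→v}` preserve the set `T̂_{u,v}`. -/
lemma sArrow_invA {g : Equiv.Perm V} (hg : g ∈ sArrow T S hS u v) (x : V) :
    x ∈ hatSide T u v ↔ g x ∈ hatSide T u v := by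
  constructor
  · intro hx
    by_contra hgx
    have h1 : g (g x) = g x := sArrow_fix_outside hg hgx
    have h2 : g x = x := g.injective h1
    rw [h2] at hgx
    exact hgx hx
  · intro hgx
    by_contra hx
    have := sArrow_fix_outside hg hx
    rw [this] at hgx
    exact hx hgx

/-- The restriction `r_{uv}(g)` of any `g ∈ G_{uv}` is supported in `T̂_{u,v}`. -/
lemma restr_mem_sArrow_key (hT : T.IsTree) (huv : T.Adj u v) {g h : Equiv.Perm V}
    (hgu : g u = u) (hgv : g v = v)
    (hhS : h ∈ S) (hr : IsRestr T u v g h) : h ∈ sArrow T S hS u v := by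
  obtain ⟨h1, h2⟩ := hr
  have hufix : h u = u := by rw [h1 u (Set.mem_insert _ _), hgu]
  have hvfix : h v = v := by
    rw [h1 v (Set.mem_insert_iff.mpr (Or.inr (mem_hatSide_self huv.ne))), hgv]
  refine ⟨hhS, ?_, ?_⟩
  · intro x hx
    rcases side_cover hT huv.ne x with hx1 | hx2
    · rcases hx1 with rfl | hx1
      · exact absurd hufix hx
      · exact hx1
    · exact absurd (h2 x hx2) hx
  · intro x y hxy hne
    rcases side_cover hT huv.ne x with hx1 | hx2 <;>
      rcases side_cover hT huv.ne y with hy1 | hy2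
    · -- both on the `v` side
      rcases hx1 with rfl | hx1
      · -- x = u
        rcases hy1 with rfl | hy1
        · exact absurd rfl hxy.ne
        · have hyv : y = v := adj_hatSide_eq hT huv hxy hy1
          exfalso
          apply hne
          rw [hyv, hufix, hvfix]
      · rcases hy1 with rfl | hy1
        · have hxv : x = v := adj_hatSide_eq hT huv hxy.symm hx1
          exfalso
          apply hne
          rw [hxv, hufix, hvfix]
        · exact ⟨hx1, hy1⟩
    · -- x on `v` side, y on `u` side
      have hhy : h y = y := h2 y hy2
      have hhx : h x ≠ x := fun he => hne (by rw [he, hhy])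
      rcases hx1 with rfl | hx1
      · exact absurd hufix hhx
      · refine ⟨hx1, ?_⟩
        by_cases hyu : y = u
        · have hxv : x = v := adj_hatSide_eq hT huv (hyu ▸ hxy.symm) hx1
          exact absurd (by rw [hxv, hvfix]) hhx
        · exact hatSide_adj hx1 hxy hyu
    · -- x on `u` side, y on `v` side
      have hhx : h x = x := h2 x hx2
      have hhy : h y ≠ y := fun he => hne (by rw [he, hhx])
      rcases hy1 with rfl | hy1
      · exact absurd hufix hhy
      · refine ⟨?_, hy1⟩
        by_cases hxu : x = u
        · have hyv : y = v := adj_hatSide_eq hT huv (hxu ▸ hxy) hy1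
          exact absurd (by rw [hyv, hvfix]) hhy
        · exact hatSide_adj hy1 hxy.symm hxu
    · exact absurd (by rw [h2 x hx2, h2 y hy2]) hne

end SArrowFacts

section SArrowFacts2

variable {T : SimpleGraph V} {S : Subgroup (Equiv.Perm V)} {hS : S ≤ graphAut T} {u v : V}

/-- The restriction `r_{ab}(g)` of an element `g ∈ S_{u→v}` again lies in `S_{u→v}`. -/
lemma restr_mem_sArrow_std (hT : T.IsTree) (huv : T.Adj u v) {a b : V} (hab : T.Adj a b)
    {g h : Equiv.Perm V} (hg : g ∈ sArrow T S hS u v) (hga : g a = a) (hgb : g b = b)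
    (hhS : h ∈ S) (hr : IsRestr T a b g h) : h ∈ sArrow T S hS u v := by
  obtain ⟨h1, h2⟩ := hr
  refine ⟨hhS, ?_, ?_⟩
  · intro x hx
    rcases side_cover hT hab.ne x with hx1 | hx2
    · refine hg.2.1 x ?_
      rw [← h1 x hx1]
      exact hx
    · exact absurd (h2 x hx2) hx
  · intro x y hxy hne
    have key : ∀ z z' : V, T.Adj z z' → z ∈ sideSet T a b → z' ∈ sideSet T b a →
        h z = g z → h z' = z' → s(h z, h z') ≠ s(z, z') →
        z ∈ hatSide T u v ∧ z' ∈ hatSide T u v := by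
      intro z z' hzz' _ _ hhz hhz' hnee
      have hgz : g z ≠ z := by
        intro he
        exact hnee (by rw [hhz, hhz', he])
      have hzA : z ∈ hatSide T u v := hg.2.1 z hgz
      refine ⟨hzA, ?_⟩
      by_cases hz'u : z' = u
      · exfalso
        have hgu : g u = u := sArrow_fix_u hg
        have hgzu : g z ≠ u := by
          intro he
          have : g z = g u := by rw [he, hgu]
          have : z = u := g.injective this
          rw [this] at hzA
          exact not_mem_hatSide_self T u v hzA
        have hmoved : s(g u, g z) ≠ s(u, z) := by
          rw [hgu]
          intro he
          rcases Sym2.eq_iff.mp he with ⟨-, he2⟩ | ⟨he1, he2⟩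
          · exact hgz he2
          · exact hgzu he2
        have := (hg.2.2 u z (hz'u ▸ hzz'.symm) hmoved).1
        exact not_mem_hatSide_self T u v this
      · exact hatSide_adj hzA hzz' hz'u
    rcases side_cover hT hab.ne x with hx1 | hx2 <;>
      rcases side_cover hT hab.ne y with hy1 | hy2
    · -- both on the `b` side: h agrees with g
      refine hg.2.2 x y hxy ?_
      rw [← h1 x hx1, ← h1 y hy1]
      exact hne
    · have hhy : h y = y := h2 y hy2
      exact key x y hxy hx1 hy2 (h1 x hx1) hhy hne
    · have := key y x hxy.symm hy1 hx2 (h1 y hy1) (h2 x hx2)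
        (fun he => hne ((Sym2.eq_swap.trans he).trans Sym2.eq_swap))
      exact ⟨this.2, this.1⟩
    · exact absurd (by rw [h2 x hx2, h2 y hy2]) hne

lemma tdecomp_sArrow (hT : T.IsTree) (huv : T.Adj u v) (htd : TDecomposable T S) :
    TDecomposable T (sArrow T S hS u v) := by
  intro a b hab g hg hga hgb
  obtain ⟨h, hhS, hr⟩ := htd a b hab g hg.1 hga hgb
  exact ⟨h, restr_mem_sArrow_std hT huv hab hg hga hgb hhS hr, hr⟩

/-- Outside `T̂_{u,v}` the local stabilizers of `S_{u→v}` are trivial. -/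
lemma locStab_sArrow_bot {w : V} (hwA : w ∉ hatSide T u v) :
    locStab T (sArrow T S hS u v) w = ⊥ := by
  refine le_antisymm ?_ bot_le
  rintro σ ⟨g, hgS, hgw, hgσ⟩
  rw [Subgroup.mem_bot]
  ext x
  have hx : (x : V) ≠ w := fun he => T.irrefl (he ▸ x.2)
  have hgx : g (x : V) = x := by
    by_contra hgx
    have hgxw : g (x : V) ≠ w := by
      intro he
      have : g (x : V) = g w := by rw [he, hgw]
      exact hx (g.injective this)
    have hmoved : s(g w, g (x : V)) ≠ s(w, (x : V)) := by
      rw [hgw]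
      intro he
      rcases Sym2.eq_iff.mp he with ⟨-, he2⟩ | ⟨he1, he2⟩
      · exact hgx he2
      · exact hx he1.symm
    exact hwA (hgS.2.2 w x x.2 hmoved).1
  have := hgσ x
  rw [hgx] at this
  simpa using this

/-- On `T̂_{u,v}`, the local stabilizers of `S_{u→v}` and of `S` coincide. -/
lemma locStab_sArrow_eq (hT : T.IsTree) (huv : T.Adj u v) (htd : TDecomposable T S)
    (hw : ∀ w ∈ hatSide T u v, ∀ g ∈ S, g w = w → g u = u)
    {w : V} (hwA : w ∈ hatSide T u v) :
    locStab T (sArrow T S hS u v) w = locStab T S w := by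
  refine le_antisymm ?_ ?_
  · rintro σ ⟨g, hgS, hgw, hgσ⟩
    exact ⟨g, hgS.1, hgw, hgσ⟩
  · rintro σ ⟨g, hgS, hgw, hgσ⟩
    have hgu : g u = u := hw w hwA g hgS hgw
    have hgv : g v = v := fix_v hT huv hwA (hS hgS) hgu hgw
    obtain ⟨h, hhS, hr⟩ := htd u v huv g hgS hgu hgv
    have hhmem : h ∈ sArrow T S hS u v := restr_mem_sArrow_key hT huv hgu hgv hhS hr
    refine ⟨h, hhmem, ?_, ?_⟩
    · rw [hr.1 w (Set.mem_insert_iff.mpr (Or.inr hwA)), hgw]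
    · intro x
      rw [hgσ x]
      by_cases hxu : (x : V) = u
      · rw [hxu, hgu, (hr.1 u (Set.mem_insert _ _)), hgu]
      · have hxA : (x : V) ∈ hatSide T u v := hatSide_adj hwA x.2 hxu
        rw [hr.1 x (Set.mem_insert_iff.mpr (Or.inr hxA))]

end SArrowFacts2

section Transfer

/-- A multiplicative equivalence between any two subsingleton groups. -/
def subsingletonMulEquiv {G H : Type*} [Group G] [Group H] [Subsingleton G]
    [Subsingleton H] : G ≃* H where
  toFun := fun _ => 1
  invFun := fun _ => 1
  left_inv := fun _ => Subsingleton.elim _ _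
  right_inv := fun _ => Subsingleton.elim _ _
  map_mul' := fun _ _ => (one_mul 1).symm

lemma inClass_of_subsingleton (𝒢 : (G : Type) → [inst : Group G] → Prop)
    (htriv : ∃ (E : Type) (_ : Group E), 𝒢 E ∧ Subsingleton E)
    (K : Type) [Group K] [Subsingleton K] : InClass 𝒢 K := by
  obtain ⟨E, instE, hGE, hsub⟩ := htriv
  exact ⟨E, instE, hGE, ⟨@subsingletonMulEquiv _ _ _ _ _ hsub⟩⟩

lemma inClass_congr {𝒢 : (G : Type) → [inst : Group G] → Prop} {K H : Type}
    [Group K] [Group H] (e : K ≃* H) (h : InClass 𝒢 H) : InClass 𝒢 K := by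
  obtain ⟨G, instG, hG, ⟨e'⟩⟩ := h
  exact ⟨G, instG, hG, ⟨e.trans e'⟩⟩

lemma induce_adj' {V : Type} {A : Set V} {T : SimpleGraph V} {a b : ↥A} :
    (SimpleGraph.induce A T).Adj a b ↔ T.Adj ↑a ↑b := by simp

variable {V : Type}

/-- The subgroup of elements of `S'` fixing `w`. -/
def stabSub (S' : Subgroup (Equiv.Perm V)) (w : V) : Subgroup (Equiv.Perm V) where
  carrier := {g | g ∈ S' ∧ g w = w}
  one_mem' := ⟨S'.one_mem, rfl⟩
  mul_mem' := by
    rintro a b ⟨ha, ha'⟩ ⟨hb, hb'⟩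
    exact ⟨S'.mul_mem ha hb, by simp [Equiv.Perm.mul_apply, hb', ha']⟩
  inv_mem' := by
    rintro a ⟨ha, ha'⟩
    refine ⟨S'.inv_mem ha, ?_⟩
    conv_lhs => rw [← ha']
    exact Equiv.symm_apply_apply a w

lemma mem_stabSub {S' : Subgroup (Equiv.Perm V)} {w : V} {g : Equiv.Perm V} :
    g ∈ stabSub S' w ↔ g ∈ S' ∧ g w = w := Iff.rfl

/-- The canonical homomorphism from the stabilizer of `w` in `S'` to the permutations of
the neighbours of `w`. -/
def phi1 (T : SimpleGraph V) (S' : Subgroup (Equiv.Perm V)) (hS' : S' ≤ graphAut T) (w : V) :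
    ↥(stabSub S' w) →* Equiv.Perm ↥(T.neighborSet w) where
  toFun g := Equiv.Perm.subtypePerm g.1 (fun x => by
    have haut := hS' (mem_stabSub.mp g.2).1 w x
    rw [(mem_stabSub.mp g.2).2] at haut
    simpa using haut)
  map_one' := by
    ext x
    simp [Equiv.Perm.subtypePerm_apply]
  map_mul' := by
    intro a b
    ext x
    simp [Equiv.Perm.subtypePerm_apply]
    rfl

/-- The canonical homomorphism from the stabilizer of `w ∈ A` in `S'` to the permutations
of the neighbours of `w` in the induced graph on `A`. -/
def phi2 (T : SimpleGraph V) (A : Set V) (S' : Subgroup (Equiv.Perm V))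
    (hS' : S' ≤ graphAut T) (hinv : ∀ g ∈ S', ∀ x : V, x ∈ A ↔ g x ∈ A) (w : ↥A) :
    ↥(stabSub S' (w : V)) →* Equiv.Perm ↥((SimpleGraph.induce A T).neighborSet w) where
  toFun g := Equiv.Perm.subtypePerm
      (Equiv.Perm.subtypePerm g.1 (fun x => (hinv _ (mem_stabSub.mp g.2).1 x).symm))
      (fun x => by
        have haut := hS' (mem_stabSub.mp g.2).1 (w : V) (x : V)
        rw [(mem_stabSub.mp g.2).2] at haut
        simp only [SimpleGraph.mem_neighborSet, induce_adj', Equiv.Perm.subtypePerm_apply]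
        exact haut)
  map_one' := by
    ext x
    simp [Equiv.Perm.subtypePerm_apply]
  map_mul' := by
    intro a b
    ext x
    simp [Equiv.Perm.subtypePerm_apply]
    rfl

lemma phi1_range {T : SimpleGraph V} {S' : Subgroup (Equiv.Perm V)} {hS' : S' ≤ graphAut T}
    {w : V} : (phi1 T S' hS' w).range = locStab T S' w := by
  ext σ
  constructor
  · rintro ⟨g, rfl⟩
    exact ⟨g.1, (mem_stabSub.mp g.2).1, (mem_stabSub.mp g.2).2, fun x => rfl⟩
  · rintro ⟨g, hgS, hgw, hgσ⟩
    refine ⟨⟨g, mem_stabSub.mpr ⟨hgS, hgw⟩⟩, ?_⟩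
    ext x
    exact (hgσ x).symm

lemma phi2_range {T : SimpleGraph V} {A : Set V} {S' : Subgroup (Equiv.Perm V)}
    {hS' : S' ≤ graphAut T} {hinv : ∀ g ∈ S', ∀ x : V, x ∈ A ↔ g x ∈ A} {w : ↥A} :
    (phi2 T A S' hS' hinv w).range = locStab (SimpleGraph.induce A T) (restrictedTo S' A) w := by
  ext σ
  constructor
  · rintro ⟨g, rfl⟩
    obtain ⟨hgS, hgw⟩ := mem_stabSub.mp g.2
    exact ⟨Equiv.Perm.subtypePerm g.1 (fun x => (hinv _ hgS x).symm), ⟨g.1, hgS, fun x => rfl⟩,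
      Subtype.ext hgw, fun x => rfl⟩
  · rintro ⟨ρ, hρ, hρw, hρσ⟩
    obtain ⟨g, hgS, hgρ⟩ := mem_restrictedTo.mp hρ
    have hgw : g (w : V) = w := by rw [← hgρ w, hρw]
    refine ⟨⟨g, mem_stabSub.mpr ⟨hgS, hgw⟩⟩, ?_⟩
    ext x
    show g ((x : ↥A) : V) = ((σ x : ↥A) : V)
    rw [hρσ x, hgρ]

lemma phi_ker_eq {T : SimpleGraph V} {A : Set V} {S' : Subgroup (Equiv.Perm V)}
    {hS' : S' ≤ graphAut T} {hinv : ∀ g ∈ S', ∀ x : V, x ∈ A ↔ g x ∈ A} {w : ↥A}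
    (hsupp : ∀ g ∈ S', ∀ x : V, x ∉ A → g x = x) :
    (phi1 T S' hS' (w : V)).ker = (phi2 T A S' hS' hinv w).ker := by
  have c1 : ∀ g : ↥(stabSub S' (w : V)), phi1 T S' hS' (w : V) g = 1 ↔
      ∀ x : ↥(T.neighborSet (w : V)), g.1 (x : V) = x := by
    intro g
    constructor
    · intro h x
      have := Equiv.ext_iff.mp h x
      exact Subtype.ext_iff.mp this
    · intro h
      ext x
      exact h x
  have c2 : ∀ g : ↥(stabSub S' (w : V)), phi2 T A S' hS' hinv w g = 1 ↔
      ∀ x : ↥((SimpleGraph.induce A T).neighborSet w), g.1 ((x : ↥A) : V) = ((x : ↥A) : V) := by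
    intro g
    constructor
    · intro h x
      have := Equiv.ext_iff.mp h x
      exact Subtype.ext_iff.mp (Subtype.ext_iff.mp this)
    · intro h
      ext x
      exact h x
  ext g
  simp only [MonoidHom.mem_ker, c1, c2]
  constructor
  · intro h x
    exact h ⟨((x : ↥A) : V), (T.mem_neighborSet _ _).mpr (induce_adj'.mp x.2)⟩
  · intro h y
    by_cases hy : (y : V) ∈ A
    · exact h ⟨⟨(y : V), hy⟩, (SimpleGraph.mem_neighborSet _ _ _).mpr
        (induce_adj'.mpr ((T.mem_neighborSet _ _).mp y.2))⟩
    · exact hsupp g.1 (mem_stabSub.mp g.2).1 (y : V) hy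

end Transfer

section IndMap

variable {V : Type}

lemma sideSet_induce_subset {A : Set V} {T : SimpleGraph V} {a b x : ↥A}
    (hx : x ∈ sideSet (SimpleGraph.induce A T) a b) : (x : V) ∈ sideSet T ↑a ↑b := by
  rcases Set.mem_insert_iff.mp hx with rfl | ⟨p, hp⟩
  · exact Set.mem_insert _ _
  · let ι : SimpleGraph.induce A T →g T := ⟨fun z => ↑z, fun hz => induce_adj'.mp hz⟩
    refine Or.inr ⟨p.map ι, fun hmem => ?_⟩
    rw [Walk.support_map] at hmem
    obtain ⟨z, hz, hza⟩ := List.mem_map.mp hmem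
    have hza' : z = a := Subtype.ext hza
    exact hp (hza' ▸ hz)

instance subsingleton_bot {G : Type*} [Group G] : Subsingleton ↥(⊥ : Subgroup G) :=
  ⟨fun a b => Subtype.ext (by
    rw [Subgroup.mem_bot.mp a.2, Subgroup.mem_bot.mp b.2])⟩

end IndMap

end Aux

/-- If the action of `G` on `T` satisfies conditions (a)-(c), and `uv` is an edge with
`G_w ⊆ G_u` for every vertex `w` of `T̂_{u,v}`, then both the action of `S_{u→v}` on `T` and
the induced action of `S_{u→v}` on `T̂_{u,v}` satisfy conditions (a)-(c) for the same
family `𝒢`. -/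
theorem sArrow_goodAction (𝒢 : (G : Type) → [inst : Group G] → Prop)
    (hfin : ∀ (G : Type) [Group G], 𝒢 G → Finite G)
    (htriv : ∃ (E : Type) (_ : Group E), 𝒢 E ∧ Subsingleton E)
    {V : Type} [Fintype V] (T : SimpleGraph V) (hT : T.IsTree)
    (S : Subgroup (Equiv.Perm V)) (hS : S ≤ graphAut T)
    (hgood : GoodAction 𝒢 T S) (u v : V) (huv : T.Adj u v)
    (hw : ∀ w ∈ hatSide T u v, ∀ g ∈ S, g w = w → g u = u) :
    GoodAction 𝒢 T (sArrow T S hS u v) ∧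
    GoodAction 𝒢 (SimpleGraph.induce (hatSide T u v) T)
      (restrictedTo (sArrow T S hS u v) (hatSide T u v)) := by
  classical
  obtain ⟨hSaut, hfix, htd, hloc⟩ := hgood
  set A := hatSide T u v with hA
  have a1 : sArrow T S hS u v ≤ graphAut T := fun g hg => hS hg.1
  have hinv : ∀ g ∈ sArrow T S hS u v, ∀ x : V, x ∈ A ↔ g x ∈ A :=
    fun g hg x => sArrow_invA hg x
  have hsupp : ∀ g ∈ sArrow T S hS u v, ∀ x : V, x ∉ A → g x = x :=
    fun g hg x hx => sArrow_fix_outside hg hx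
  have htd' : TDecomposable T (sArrow T S hS u v) := tdecomp_sArrow hT huv htd
  constructor
  · -- Part (i): the action of `S_{u→v}` on `T`
    refine ⟨a1, Or.inl ⟨u, fun g hg => sArrow_fix_u hg⟩, htd', ?_⟩
    intro z
    by_cases hzA : z ∈ A
    · rw [locStab_sArrow_eq hT huv htd hw hzA]
      exact hloc z
    · rw [locStab_sArrow_bot hzA]
      constructor
      · exact inClass_of_subsingleton 𝒢 htriv _
      · intro g hg hg1
        exact ((hg1 (Subgroup.mem_bot.mp hg)).elim : _)
  · -- Part (ii): the induced action on `T̂_{u,v}`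
    refine ⟨?_, ?_, ?_, ?_⟩
    · -- contained in the automorphism group
      intro σ hσ
      obtain ⟨g, hgS', hgσ⟩ := mem_restrictedTo.mp hσ
      rw [mem_graphAut]
      intro a b
      rw [induce_adj', induce_adj', hgσ a, hgσ b]
      exact hS hgS'.1 (a : V) (b : V)
    · -- `v` is a fixed vertex
      refine Or.inl ⟨⟨v, mem_hatSide_self huv.ne⟩, fun σ hσ => ?_⟩
      obtain ⟨g, hgS', hgσ⟩ := mem_restrictedTo.mp hσ
      refine Subtype.ext ?_
      rw [hgσ]
      exact sArrow_fix_v huv hgS'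
    · -- t-decomposability
      intro a b hab σ hσ hσa hσb
      obtain ⟨g, hgS', hgσ⟩ := mem_restrictedTo.mp hσ
      have hga : g (a : V) = a := by rw [← hgσ a, hσa]
      have hgb : g (b : V) = b := by rw [← hgσ b, hσb]
      have habT : T.Adj (a : V) (b : V) := induce_adj'.mp hab
      obtain ⟨h, hhS', hr⟩ := htd' (a : V) (b : V) habT g hgS' hga hgb
      refine ⟨Equiv.Perm.subtypePerm h (fun x => (sArrow_invA hhS' x).symm),
        ⟨h, hhS', fun x => rfl⟩, ?_, ?_⟩
      · intro x hx
        refine Subtype.ext ?_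
        show h (x : V) = ((σ x : ↥A) : V)
        rw [hr.1 (x : V) (sideSet_induce_subset hx), hgσ x]
      · intro x hx
        exact Subtype.ext (hr.2 (x : V) (sideSet_induce_subset hx))
    · -- local stabilizers
      intro z
      have e1 := ((QuotientGroup.quotientKerEquivRange (phi1 T (sArrow T S hS u v) a1 ↑z)).symm.trans
        (QuotientGroup.quotientMulEquivOfEq (phi_ker_eq (hinv := hinv) hsupp))).trans
        (QuotientGroup.quotientKerEquivRange (phi2 T A (sArrow T S hS u v) a1 hinv z))
      have efin : ↥(locStab (SimpleGraph.induce A T) (restrictedTo (sArrow T S hS u v) A) z)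
          ≃* ↥(locStab T S ↑z) :=
        ((MulEquiv.subgroupCongr phi2_range.symm).trans e1.symm).trans
          (MulEquiv.subgroupCongr (phi1_range.trans (locStab_sArrow_eq hT huv htd hw z.2)))
      constructor
      · exact inClass_congr efin (hloc ↑z).1
      · -- semi-freeness
        intro σ hσ hσ1 x hσx τ hτ
        obtain ⟨ρ, hρ, hρw, hρσ⟩ := mem_locStab.mp hσ
        obtain ⟨g, hgS', hgρ⟩ := mem_restrictedTo.mp hρ
        have hgw : g (z : V) = z := by rw [← hgρ z, hρw]
        obtain ⟨ρτ, hρτ, hρτw, hρτσ⟩ := mem_locStab.mp hτ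
        obtain ⟨k, hkS', hkρ⟩ := mem_restrictedTo.mp hρτ
        have hkw : k (z : V) = z := by rw [← hkρ z, hρτw]
        set σ' := phi1 T (sArrow T S hS u v) a1 ↑z ⟨g, mem_stabSub.mpr ⟨hgS', hgw⟩⟩ with hσ'
        set τ' := phi1 T (sArrow T S hS u v) a1 ↑z ⟨k, mem_stabSub.mpr ⟨hkS', hkw⟩⟩ with hτ'
        have hσ'mem : σ' ∈ locStab T S ↑z := by
          rw [← locStab_sArrow_eq (hS := hS) hT huv htd hw z.2, ← phi1_range (hS' := a1)]
          exact ⟨_, rfl⟩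
        have hτ'mem : τ' ∈ locStab T S ↑z := by
          rw [← locStab_sArrow_eq (hS := hS) hT huv htd hw z.2, ← phi1_range (hS' := a1)]
          exact ⟨_, rfl⟩
        have hx0 : ∃ x0, σ x0 ≠ x0 := by
          by_contra hcon
          push_neg at hcon
          exact hσ1 (Equiv.ext hcon)
        obtain ⟨x0, hx0⟩ := hx0
        have hgx0 : g ((x0 : ↥A) : V) ≠ ((x0 : ↥A) : V) := by
          intro he
          apply hx0
          refine Subtype.ext (Subtype.ext ?_)
          calc ((σ x0 : ↥A) : V) = ((ρ (x0 : ↥A)) : V) := by rw [hρσ x0]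
          _ = g ((x0 : ↥A) : V) := hgρ _
          _ = ((x0 : ↥A) : V) := he
        have hnb0 : ((x0 : ↥A) : V) ∈ T.neighborSet (z : V) :=
          (T.mem_neighborSet _ _).mpr (induce_adj'.mp x0.2)
        have hσ'1 : σ' ≠ 1 := by
          intro he
          apply hgx0
          have := Equiv.ext_iff.mp he ⟨((x0 : ↥A) : V), hnb0⟩
          exact Subtype.ext_iff.mp this
        have hnb : ((x : ↥A) : V) ∈ T.neighborSet (z : V) :=
          (T.mem_neighborSet _ _).mpr (induce_adj'.mp x.2)
        have hgx : g ((x : ↥A) : V) = ((x : ↥A) : V) := by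
          calc g ((x : ↥A) : V) = ((ρ (x : ↥A)) : V) := (hgρ _).symm
          _ = ((σ x : ↥A) : V) := by rw [hρσ x]
          _ = ((x : ↥A) : V) := by rw [hσx]
        have hfixσ' : σ' (⟨((x : ↥A) : V), hnb⟩ : ↥(T.neighborSet (z : V))) = ⟨_, hnb⟩ :=
          Subtype.ext hgx
        have hout := (hloc ↑z).2 σ' hσ'mem hσ'1 ⟨((x : ↥A) : V), hnb⟩ hfixσ' τ' hτ'mem
        have hkx : k ((x : ↥A) : V) = ((x : ↥A) : V) := Subtype.ext_iff.mp hout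
        refine Subtype.ext (Subtype.ext ?_)
        calc ((τ x : ↥A) : V) = ((ρτ (x : ↥A)) : V) := by rw [hρτσ x]
        _ = k ((x : ↥A) : V) := hkρ _
        _ = ((x : ↥A) : V) := hkx
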